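/- For the biochemical control circuit with k - 1 = αk² (α = ∏αᵢ), the Jacobian satisfies det(J(x)) = (-1)ⁿ(α - g'(xₙ)); in particular det(J(x)) = 0 whenever xₙ = 0, and consequently the system is not contractive on ℝⁿ₊ with respect to any norm. -/

import Mathlib

open Finset

/-- The index `n-1` (the last coordinate) in `Fin n`. -/
def lastIdx (n : ℕ) (hn : 0 < n) : Fin n := ⟨n - 1, by omega⟩

/-- The nonlinearity `g(u) = (1+u)/(k+u)`. -/
noncomputable def gfun (k u : ℝ) : ℝ := (1 + u) / (k + u)

/-- The vector field of the biochemical control circuit. -/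
noncomputable def Ffield (n : ℕ) (hn : 0 < n) (k : ℝ) (α : Fin n → ℝ)
    (x : Fin n → ℝ) : Fin n → ℝ := fun i =>
  if (i : ℕ) = 0 then gfun k (x (lastIdx n hn)) - α i * x i
  else x ⟨(i : ℕ) - 1, by have := i.isLt; omega⟩ - α i * x i

/-- The Jacobian of the circuit: diagonal `-αᵢ`, subdiagonal `1`,
top-right entry `g'(xₙ) = (k-1)/(k+xₙ)²`. -/
noncomputable def Jmat (n : ℕ) (hn : 0 < n) (k : ℝ) (α : Fin n → ℝ)
    (x : Fin n → ℝ) : Matrix (Fin n) (Fin n) ℝ := fun i j =>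
  if i = j then -α i
  else if (i : ℕ) = (j : ℕ) + 1 then 1
  else if (i : ℕ) = 0 ∧ j = lastIdx n hn then (k - 1) / (k + x (lastIdx n hn)) ^ 2
  else 0


/-!
Expanding `det J` along its first row leaves two triangular minors, so
`det J = ∏ (-αᵢ) + (-1)ⁿ⁻¹ g'(xₙ)`. When `k - 1 = αk²` we have `g'(0) = α`, so `J(0)` is singular,
with the positive kernel vector `vᵢ = ∏_{j > i} αⱼ`. Differentiating a contraction estimate with
rate `c` at `t = 0` gives `c N(a - b) ≤ N(F a - F b)` on the orthant; but `F(εv) - F(0)` is of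
order `ε²` while `N(εv)` is of order `ε`.
-/

theorem lastIdx_eq_last (m : ℕ) (hn : 0 < m + 1) : lastIdx (m + 1) hn = Fin.last m := rfl

section CyclicBidiagonal

variable {R : Type*} [CommRing R] {m : ℕ}

def cyclicBidiagonal (d : Fin (m + 2) → R) (β : R) : Matrix (Fin (m + 2)) (Fin (m + 2)) R :=
  Matrix.of fun i j =>
    if i = j then d i
    else if (i : ℕ) = (j : ℕ) + 1 then 1
    else if (i : ℕ) = 0 ∧ j = Fin.last (m + 1) then β
    else 0

theorem cyclicBidiagonal_apply (d : Fin (m + 2) → R) (β : R) (i j : Fin (m + 2)) :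
    cyclicBidiagonal d β i j =
      if i = j then d i
      else if (i : ℕ) = (j : ℕ) + 1 then 1
      else if (i : ℕ) = 0 ∧ j = Fin.last (m + 1) then β
      else 0 := rfl

theorem det_cyclicBidiagonal_submatrix_succ_succ (d : Fin (m + 2) → R) (β : R) :
    ((cyclicBidiagonal d β).submatrix Fin.succ Fin.succ).det = ∏ i : Fin (m + 1), d i.succ := by
  rw [Matrix.det_of_isLowerTriangular]
  · simp [cyclicBidiagonal_apply]
  · intro i j hij
    have hij : (i : ℕ) < j := hij
    simp only [Matrix.submatrix_apply, cyclicBidiagonal_apply, Fin.ext_iff, Fin.val_succ,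
      Fin.val_last]
    rw [if_neg (by omega), if_neg (by omega), if_neg (by omega)]

theorem det_cyclicBidiagonal_submatrix_succ_castSucc (d : Fin (m + 2) → R) (β : R) :
    ((cyclicBidiagonal d β).submatrix Fin.succ Fin.castSucc).det = 1 := by
  rw [Matrix.det_of_isUpperTriangular]
  · refine Finset.prod_eq_one fun i _ => ?_
    simp only [Matrix.submatrix_apply, cyclicBidiagonal_apply, Fin.ext_iff, Fin.val_succ,
      Fin.val_castSucc]
    rw [if_neg (by omega), if_pos trivial]
  · intro i j hij
    have hij : (j : ℕ) < i := hij
    simp only [Matrix.submatrix_apply, cyclicBidiagonal_apply, Fin.ext_iff, Fin.val_succ,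
      Fin.val_castSucc, Fin.val_last]
    rw [if_neg (by omega), if_neg (by omega), if_neg (by omega)]

theorem det_cyclicBidiagonal (d : Fin (m + 2) → R) (β : R) :
    (cyclicBidiagonal d β).det = (∏ i, d i) + (-1) ^ (m + 1) * β := by
  rw [Matrix.det_succ_row_zero,
    Fintype.sum_eq_add 0 (Fin.last (m + 1)) (Fin.ext_iff.not.2 (by simp))]
  · have hA00 : cyclicBidiagonal d β 0 0 = d 0 := by simp [cyclicBidiagonal_apply]
    have hA0l : cyclicBidiagonal d β 0 (Fin.last (m + 1)) = β := by
      simp [cyclicBidiagonal_apply, Fin.ext_iff]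
    simp [hA00, hA0l, det_cyclicBidiagonal_submatrix_succ_succ,
      det_cyclicBidiagonal_submatrix_succ_castSucc, Fin.prod_univ_succ]
  · rintro j ⟨hj0, hjl⟩
    have hj0 : (j : ℕ) ≠ 0 := Fin.val_ne_iff.2 hj0
    have hjl : (j : ℕ) ≠ m + 1 := Fin.val_ne_iff.2 hjl
    have : cyclicBidiagonal d β 0 j = 0 := by
      simp only [cyclicBidiagonal_apply, Fin.ext_iff, Fin.val_zero, Fin.val_last]
      rw [if_neg (by omega), if_neg (by omega), if_neg (by omega)]
    simp [this]

end CyclicBidiagonal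

theorem Jmat_eq_cyclicBidiagonal (m : ℕ) (hn : 0 < m + 2) (k : ℝ) (α : Fin (m + 2) → ℝ)
    (x : Fin (m + 2) → ℝ) :
    Jmat (m + 2) hn k α x =
      cyclicBidiagonal (-α) ((k - 1) / (k + x (Fin.last (m + 1))) ^ 2) := rfl

theorem det_Jmat (m : ℕ) (hn : 0 < m + 2) (k : ℝ) (α : Fin (m + 2) → ℝ) (x : Fin (m + 2) → ℝ) :
    (Jmat (m + 2) hn k α x).det =
      (-1) ^ (m + 2) * ((∏ i, α i) - (k - 1) / (k + x (lastIdx (m + 2) hn)) ^ 2) := by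
  rw [Jmat_eq_cyclicBidiagonal, det_cyclicBidiagonal, Pi.neg_def, Finset.prod_neg,
    Finset.card_univ, Fintype.card_fin, lastIdx_eq_last]
  ring

open Filter Topology

theorem Seminorm.mul_le_of_hasDerivWithinAt_of_le_exp {E : Type*} [NormedAddCommGroup E]
    [NormedSpace ℝ E] (p : Seminorm ℝ E) (hp : Continuous p) {φ : ℝ → E} {D : E} {c : ℝ}
    (hφ : HasDerivWithinAt φ D (Set.Ioi 0) 0)
    (hdecay : ∀ t > 0, p (φ t) ≤ Real.exp (-c * t) * p (φ 0)) :
    c * p (φ 0) ≤ p D := by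
  have hφ' : Tendsto (slope φ 0) (𝓝[>] 0) (𝓝 D) :=
    (hasDerivWithinAt_iff_tendsto_slope' Set.self_notMem_Ioi).1 hφ
  have hslope : Tendsto (fun t => p (slope φ 0 t)) (𝓝[>] 0) (𝓝 (p D)) :=
    (hp.tendsto D).comp hφ'
  have hexp : HasDerivAt (fun t : ℝ => Real.exp (-c * t)) (-c) 0 := by
    simpa using ((hasDerivAt_id (0 : ℝ)).const_mul (-c)).exp
  have hexp_slope : Tendsto (fun t => -slope (fun t : ℝ => Real.exp (-c * t)) 0 t * p (φ 0))
      (𝓝[>] 0) (𝓝 (c * p (φ 0))) := by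
    have := ((hasDerivAt_iff_tendsto_slope.1 hexp).mono_left
      (nhdsWithin_mono 0 fun t (ht : t ∈ Set.Ioi 0) => ne_of_gt ht)).neg.mul_const (p (φ 0))
    simpa using this
  refine le_of_tendsto_of_tendsto hexp_slope hslope
    (eventually_nhdsWithin_of_forall fun t (ht : 0 < t) => ?_)
  have hdiff : (1 - Real.exp (-c * t)) * p (φ 0) ≤ p (φ t - φ 0) := by
    have := (le_abs_self _).trans (p.norm_sub_map_le_sub (φ 0) (φ t))
    rw [map_sub_rev] at this
    linarith [hdecay t ht]
  have hlhs : -slope (fun t : ℝ => Real.exp (-c * t)) 0 t * p (φ 0) =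
      t⁻¹ * ((1 - Real.exp (-c * t)) * p (φ 0)) := by
    rw [slope_def_field]
    simp only [mul_zero, Real.exp_zero, sub_zero]
    ring
  have hrhs : p (slope φ 0 t) = t⁻¹ * p (φ t - φ 0) := by
    rw [slope_def_module, map_smul_eq_mul, Real.norm_eq_abs, sub_zero, abs_of_pos (inv_pos.2 ht)]
  exact (hlhs.trans_le (mul_le_mul_of_nonneg_left hdiff (inv_nonneg.2 ht.le))).trans_eq hrhs.symm

section TailProd

variable {M : Type*} [CommMonoid M]

def tailProd {n : ℕ} (α : Fin n → M) (i : Fin n) : M := ∏ j ∈ Finset.Ioi i, α j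

theorem tailProd_pos {n : ℕ} {α : Fin n → ℝ} (hα : ∀ i, 0 < α i) (i : Fin n) :
    0 < tailProd α i :=
  Finset.prod_pos fun j _ => hα j

theorem tailProd_last {m : ℕ} (α : Fin (m + 1) → M) : tailProd α (Fin.last m) = 1 := by
  rw [tailProd, ← Fin.top_eq_last, Finset.Ioi_top, Finset.prod_empty]

theorem tailProd_pred {n : ℕ} (α : Fin n → M) (i : Fin n) (hi : (i : ℕ) ≠ 0) :
    tailProd α ⟨(i : ℕ) - 1, by omega⟩ = α i * tailProd α i := by
  rw [tailProd, tailProd, mul_prod_Ioi_eq_prod_Ici]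
  congr 1
  ext j
  simp only [Finset.mem_Ioi, Finset.mem_Ici, Fin.lt_def, Fin.le_def]
  omega

theorem mul_tailProd_zero {m : ℕ} (α : Fin (m + 1) → M) : α 0 * tailProd α 0 = ∏ i, α i := by
  rw [tailProd, Fin.prod_Ioi_zero, Fin.prod_univ_succ]

end TailProd

theorem Ffield_smul_tailProd_sub_Ffield_zero (m : ℕ) (hn : 0 < m + 1) (k ε : ℝ)
    (α : Fin (m + 1) → ℝ) :
    Ffield (m + 1) hn k α (ε • tailProd α) - Ffield (m + 1) hn k α 0 =
      (gfun k ε - gfun k 0 - ε * ∏ i, α i) • Pi.single 0 1 := by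
  funext i
  by_cases hi : (i : ℕ) = 0
  · obtain rfl : i = 0 := Fin.ext hi
    simp only [Pi.sub_apply, Pi.smul_apply, Pi.zero_apply, smul_eq_mul, Ffield,
      Fin.coe_ofNat_eq_mod, Nat.zero_mod, ↓reduceIte, lastIdx_eq_last, tailProd_last, mul_one,
      mul_zero, sub_zero, ← mul_tailProd_zero, Pi.single_eq_same]
    ring
  · have hi0 : i ≠ 0 := fun h => hi (congrArg Fin.val h)
    simp only [Pi.sub_apply, Pi.smul_apply, Pi.zero_apply, smul_eq_mul, Ffield, hi, ↓reduceIte,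
      tailProd_pred α i hi, Pi.single_eq_of_ne hi0, mul_zero, sub_zero]
    ring

theorem abs_gfun_sub_gfun_zero_sub_le {k P ε : ℝ} (hk : 1 < k) (hP : k - 1 = P * k ^ 2)
    (hε : 0 ≤ ε) : |gfun k ε - gfun k 0 - ε * P| ≤ (k - 1) / k ^ 3 * ε ^ 2 := by
  have hk0 : 0 < k := by linarith
  have hk1 : 0 ≤ k - 1 := by linarith
  have hP' : P = (k - 1) / k ^ 2 := by
    rw [hP, mul_div_cancel_right₀ _ (by positivity)]
  have hδ : gfun k ε - gfun k 0 - ε * P = -((k - 1) * ε ^ 2 / (k ^ 2 * (k + ε))) := by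
    rw [hP', gfun, gfun]
    field_simp
    ring
  rw [hδ, abs_neg, abs_of_nonneg (by positivity)]
  calc (k - 1) * ε ^ 2 / (k ^ 2 * (k + ε)) ≤ (k - 1) * ε ^ 2 / (k ^ 2 * k) := by
        gcongr
        linarith
    _ = (k - 1) / k ^ 3 * ε ^ 2 := by ring

theorem circuit_not_contracting (m : ℕ) (hn : 0 < m + 1) (k : ℝ) (hk : 1 < k)
    (α : Fin (m + 1) → ℝ) (hα : ∀ i, 0 < α i) (hcond : k - 1 = (∏ i, α i) * k ^ 2)
    (sol : ℝ → (Fin (m + 1) → ℝ) → (Fin (m + 1) → ℝ))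
    (hsol0 : ∀ a, (∀ i, 0 ≤ a i) → sol 0 a = a)
    (hode : ∀ a, (∀ i, 0 ≤ a i) →
      HasDerivAt (fun s => sol s a) (Ffield (m + 1) hn k α a) 0)
    (p : Seminorm ℝ (Fin (m + 1) → ℝ)) (hp : ∀ y, p y = 0 → y = 0) {c : ℝ} (hc : 0 < c)
    (hcontr : ∀ t > 0, ∀ a b : Fin (m + 1) → ℝ, (∀ i, 0 ≤ a i) → (∀ i, 0 ≤ b i) →
      p (sol t a - sol t b) ≤ Real.exp (-c * t) * p (a - b)) :
    False := by
  have hF : ∀ a b : Fin (m + 1) → ℝ, (∀ i, 0 ≤ a i) → (∀ i, 0 ≤ b i) →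
      c * p (a - b) ≤ p (Ffield (m + 1) hn k α a - Ffield (m + 1) hn k α b) := by
    intro a b ha hb
    have h := p.mul_le_of_hasDerivWithinAt_of_le_exp p.convexOn.locallyLipschitz.continuous
      ((hode a ha).sub (hode b hb)).hasDerivWithinAt
      fun t ht => by simpa only [Pi.sub_apply, hsol0 a ha, hsol0 b hb] using hcontr t ht a b ha hb
    simpa only [Pi.sub_apply, hsol0 a ha, hsol0 b hb] using h
  set M := (k - 1) / k ^ 3 * p (Pi.single 0 1)
  -- along the kernel direction of `J(0)` the vector field is flat to second order
  have hflat : ∀ ε > 0, c * p (tailProd α) ≤ ε * M := by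
    intro ε hε
    have h := hF (ε • tailProd α) 0 (fun i => (mul_pos hε (tailProd_pos hα i)).le) fun _ => le_rfl
    rw [sub_zero, Ffield_smul_tailProd_sub_Ffield_zero, map_smul_eq_mul, map_smul_eq_mul,
      Real.norm_eq_abs, Real.norm_eq_abs, abs_of_pos hε] at h
    have hδ := mul_le_mul_of_nonneg_right (abs_gfun_sub_gfun_zero_sub_le hk hcond hε.le)
      (apply_nonneg p (Pi.single 0 1))
    refine le_of_mul_le_mul_left ?_ hε
    linarith
  have hlim : Tendsto (fun ε => ε * M) (𝓝[>] 0) (𝓝 0) := by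
    have : Tendsto (fun ε => ε * M) (𝓝 0) (𝓝 (0 * M)) := tendsto_id.mul_const M
    rw [zero_mul] at this
    exact this.mono_left nhdsWithin_le_nhds
  have hv : 0 < p (tailProd α) := by
    refine (apply_nonneg p _).lt_of_ne fun h => ?_
    have := congrFun (hp _ h.symm) (Fin.last m)
    rw [tailProd_last] at this
    exact one_ne_zero this
  linarith [mul_pos hc hv, ge_of_tendsto hlim (eventually_nhdsWithin_of_forall hflat)]

/-- For the circuit with `k - 1 = αk²` (`α = ∏αᵢ`), the Jacobian satisfies
`det J(x) = (-1)ⁿ (α - g'(xₙ))`; in particular `det J(x) = 0` when `xₙ = 0`, and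
consequently the system is not contractive on `ℝⁿ₊` with respect to any norm. -/
theorem stmt17 (n : ℕ) (hn : 2 ≤ n) (k : ℝ) (hk : 1 < k)
    (α : Fin n → ℝ) (hα : ∀ i, 0 < α i)
    (hcond : k - 1 = (∏ i, α i) * k ^ 2)
    (sol : ℝ → (Fin n → ℝ) → (Fin n → ℝ))
    (hsol0 : ∀ a, (∀ i, 0 ≤ a i) → sol 0 a = a)
    (hode : ∀ a, (∀ i, 0 ≤ a i) → ∀ t : ℝ, 0 ≤ t →
      HasDerivAt (fun s => sol s a) (Ffield n (by omega) k α (sol t a)) t) :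
    (∀ x : Fin n → ℝ, (∀ i, 0 ≤ x i) →
      (Jmat n (by omega) k α x).det =
        (-1 : ℝ) ^ n * ((∏ i, α i) - (k - 1) / (k + x (lastIdx n (by omega))) ^ 2)) ∧
    (∀ x : Fin n → ℝ, (∀ i, 0 ≤ x i) → x (lastIdx n (by omega)) = 0 →
      (Jmat n (by omega) k α x).det = 0) ∧
    ∀ N : (Fin n → ℝ) → ℝ,
      (∀ y, 0 ≤ N y) → (∀ y, N y = 0 ↔ y = 0) →
      (∀ y z, N (y + z) ≤ N y + N z) → (∀ (c : ℝ) y, N (c • y) = |c| * N y) →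
      ¬ ∃ c : ℝ, 0 < c ∧
        ∀ t : ℝ, 0 ≤ t → ∀ a b : Fin n → ℝ, (∀ i, 0 ≤ a i) → (∀ i, 0 ≤ b i) →
          N (sol t a - sol t b) ≤ Real.exp (-c * t) * N (a - b) := by
  obtain ⟨m, rfl⟩ : ∃ m, n = m + 2 := ⟨n - 2, by omega⟩
  have hg'0 : (k - 1) / (k + 0) ^ 2 = ∏ i, α i := by
    rw [add_zero, hcond, mul_div_cancel_right₀ _ (by positivity)]
  refine ⟨fun x _ => det_Jmat m _ k α x, fun x _ hx => ?_, ?_⟩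
  · rw [det_Jmat, hx, hg'0, sub_self, mul_zero]
  · rintro N - hN hadd hsmul ⟨c, hc, hcontr⟩
    exact circuit_not_contracting (m + 1) _ k hk α hα hcond sol hsol0
      (fun a ha => hsol0 a ha ▸ hode a ha 0 le_rfl)
      (Seminorm.of N hadd fun r y => by rw [hsmul, Real.norm_eq_abs]) (fun y => (hN y).1) hc
      fun t ht => hcontr t ht.le
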